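/- arXiv:1303.1847 — 3 statements merged into one kernel-verified Lean document; each statement's English description precedes it below -/
import Mathlib

section
/- Let x ∈ ℝ^N, let I ⊆ {1,…,N}, and let x̂ ∈ ℝ^N satisfy Φx̂ = Φx and ‖x̂‖₁ ≤ ‖x‖₁ (e.g., x̂ is a Basis Pursuit solution for y = Φx). Suppose there exists a vector v ∈ ℝ^N such that (i) v = Φ^T w for some w ∈ ℝ^m, (ii) v_I = sgn(x_I), and (iii) ‖v_{I^c}‖_∞ ≤ 1/2. Then h = x − x̂ satisfies ‖h_{I^c}‖₁ ≤ 4‖x_{I^c}‖₁. -/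
open Finset Matrix

open scoped Classical

noncomputable section

/-- The ℓ₂→ℓ₂ operator (spectral) norm of a real matrix. -/
def specNorm {α β : Type*} [Fintype α] [Fintype β] (A : Matrix α β ℝ) : ℝ :=
  sSup {t : ℝ | ∃ x : β → ℝ, (∑ j, x j ^ 2) ≤ 1 ∧ t = Real.sqrt (∑ i, (∑ j, A i j * x j) ^ 2)}

variable {m N : ℕ}

/-- The submatrix of `Φ` formed by the columns indexed by `I`. -/
def colSub (Φ : Matrix (Fin m) (Fin N) ℝ) (I : Finset (Fin N)) :
    Matrix (Fin m) {i // i ∈ I} ℝ :=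
  Matrix.of fun r j => Φ r (j : Fin N)

/-- The Gram matrix `Φ_Iᵀ Φ_I`. -/
def gram (Φ : Matrix (Fin m) (Fin N) ℝ) (I : Finset (Fin N)) :
    Matrix {i // i ∈ I} {i // i ∈ I} ℝ :=
  (colSub Φ I)ᵀ * colSub Φ I

/-- `‖Φ_Iᵀ φ_i‖₂²`. -/
def sincSq (Φ : Matrix (Fin m) (Fin N) ℝ) (I : Finset (Fin N)) (i : Fin N) : ℝ :=
  ∑ j ∈ I, (∑ r, Φ r j * Φ r i) ^ 2

/-- All columns of `Φ` have unit ℓ₂ norm. -/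
def unitCols (Φ : Matrix (Fin m) (Fin N) ℝ) : Prop :=
  ∀ j, (∑ r, Φ r j ^ 2) = 1

/-- `Φ` is `(k,δ,ε)`-StRIP: a uniformly random `k`-subset `I` satisfies
`‖Φ_Iᵀ Φ_I − Id‖ ≤ δ` with probability at least `1 − ε`. -/
def StRIP (Φ : Matrix (Fin m) (Fin N) ℝ) (k : ℕ) (δ ε : ℝ) : Prop :=
  (1 - ε) * ((Finset.powersetCard k (univ : Finset (Fin N))).card : ℝ) ≤
    (((Finset.powersetCard k (univ : Finset (Fin N))).filter
        fun I => specNorm (gram Φ I - 1) ≤ δ).card : ℝ)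

/-- `Φ` is `(k,α,ε)`-SINC: a uniformly random `k`-subset `I` satisfies
`max_{i ∉ I} ‖Φ_Iᵀ φ_i‖₂² ≤ α` with probability at least `1 − ε`. -/
def SINC (Φ : Matrix (Fin m) (Fin N) ℝ) (k : ℕ) (α ε : ℝ) : Prop :=
  (1 - ε) * ((Finset.powersetCard k (univ : Finset (Fin N))).card : ℝ) ≤
    (((Finset.powersetCard k (univ : Finset (Fin N))).filter
        fun I => ∀ i ∉ I, sincSq Φ I i ≤ α).card : ℝ)

/-- ℓ₁ norm on `ℝ^N`. -/
def l1 (x : Fin N → ℝ) : ℝ := ∑ i, |x i|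

/-- ℓ₂ norm on `ℝ^N`. -/
def l2 (x : Fin N → ℝ) : ℝ := Real.sqrt (∑ i, x i ^ 2)

/-- Restriction `x_I` of a vector to the coordinates in `I` (zero outside `I`). -/
def restr (I : Finset (Fin N)) (x : Fin N → ℝ) : Fin N → ℝ :=
  fun i => if i ∈ I then x i else 0

/-- `x` is `k`-sparse. -/
def kSparse (k : ℕ) (x : Fin N → ℝ) : Prop :=
  ((univ : Finset (Fin N)).filter fun i => x i ≠ 0).card ≤ k

/-- `min_{x' k-sparse} ‖x − x′‖₁`. -/
def bestK (k : ℕ) (x : Fin N → ℝ) : ℝ :=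
  sInf {t : ℝ | ∃ x' : Fin N → ℝ, kSparse k x' ∧ t = l1 (x - x')}

/-- `xh` is a (noiseless) Basis Pursuit solution for the data `y`. -/
def isBPsol (Φ : Matrix (Fin m) (Fin N) ℝ) (y : Fin m → ℝ) (xh : Fin N → ℝ) : Prop :=
  Φ.mulVec xh = y ∧ ∀ u : Fin N → ℝ, Φ.mulVec u = y → l1 xh ≤ l1 u

lemma sign_mul_self' (a : ℝ) : Real.sign a * a = |a| := by
  rcases lt_trichotomy a 0 with h|h|h
  · rw [Real.sign_of_neg h, abs_of_neg h]; ring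
  · simp [h]
  · rw [Real.sign_of_pos h, abs_of_pos h]; ring

lemma abs_sign_le_one' (a : ℝ) : |Real.sign a| ≤ 1 := by
  rcases lt_trichotomy a 0 with h|h|h
  · rw [Real.sign_of_neg h]; norm_num
  · simp [h]
  · rw [Real.sign_of_pos h]; norm_num

lemma l1_restr (I : Finset (Fin N)) (x : Fin N → ℝ) :
    l1 (restr I x) = ∑ i ∈ I, |x i| := by
  unfold l1 restr
  rw [← Finset.sum_add_sum_compl I]
  have h1 : ∑ i ∈ I, |if i ∈ I then x i else 0| = ∑ i ∈ I, |x i| :=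
    Finset.sum_congr rfl fun i hi => by rw [if_pos hi]
  have h2 : ∑ i ∈ Iᶜ, |if i ∈ I then x i else 0| = 0 :=
    Finset.sum_eq_zero fun i hi => by
      rw [if_neg (Finset.mem_compl.mp hi), abs_zero]
  rw [h1, h2, add_zero]

/-- Lemma: off-support error bound via a dual certificate. -/
theorem stmt2 (m N : ℕ)
    (Φ : Matrix (Fin m) (Fin N) ℝ) (hcols : unitCols Φ)
    (I : Finset (Fin N)) (x xh : Fin N → ℝ)
    (hfeas : Φ.mulVec xh = Φ.mulVec x) (hmin : l1 xh ≤ l1 x)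
    (v : Fin N → ℝ) (w : Fin m → ℝ)
    (hrow : v = Φᵀ.mulVec w)
    (hvI : ∀ i ∈ I, v i = Real.sign (x i))
    (hvIc : ∀ i ∉ I, |v i| ≤ 1 / 2) :
    l1 (restr Iᶜ (x - xh)) ≤ 4 * l1 (restr Iᶜ x) := by
  have hΦh : Φ.mulVec (x - xh) = 0 := by
    rw [Matrix.mulVec_sub, hfeas, sub_self]
  have key : ∑ i, v i * (x i - xh i) = 0 := by
    have h1 : v ⬝ᵥ (x - xh) = w ⬝ᵥ Φ.mulVec (x - xh) := by
      rw [Matrix.dotProduct_mulVec, hrow, Matrix.mulVec_transpose]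
    have h2 : v ⬝ᵥ (x - xh) = ∑ i, v i * (x i - xh i) := by
      simp [dotProduct]
    rw [← h2, h1, hΦh, dotProduct_zero]
  have split := Finset.sum_add_sum_compl I (fun i => v i * (x i - xh i))
  have hIeq : ∑ i ∈ I, v i * (x i - xh i)
      = ∑ i ∈ I, Real.sign (x i) * (x i - xh i) :=
    Finset.sum_congr rfl fun i hi => by rw [hvI i hi]
  have hA : ∑ i ∈ I, Real.sign (x i) * (x i - xh i)
      = - ∑ i ∈ Iᶜ, v i * (x i - xh i) := by
    rw [key] at split; linarith [split, hIeq]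
  have hAle : ∑ i ∈ I, Real.sign (x i) * (x i - xh i)
      ≤ (1/2) * ∑ i ∈ Iᶜ, |x i - xh i| := by
    rw [hA]
    calc - ∑ i ∈ Iᶜ, v i * (x i - xh i)
        ≤ |∑ i ∈ Iᶜ, v i * (x i - xh i)| := neg_le_abs _
      _ ≤ ∑ i ∈ Iᶜ, |v i * (x i - xh i)| := Finset.abs_sum_le_sum_abs _ _
      _ ≤ ∑ i ∈ Iᶜ, (1/2) * |x i - xh i| := by
          refine Finset.sum_le_sum fun i hi => ?_
          rw [abs_mul]
          exact mul_le_mul_of_nonneg_right (hvIc i (Finset.mem_compl.mp hi))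
            (abs_nonneg _)
      _ = (1/2) * ∑ i ∈ Iᶜ, |x i - xh i| := (Finset.mul_sum _ _ _).symm
  have lx : l1 x = ∑ i ∈ I, |x i| + ∑ i ∈ Iᶜ, |x i| :=
    (Finset.sum_add_sum_compl I fun i => |x i|).symm
  have lxh : l1 xh = ∑ i ∈ I, |xh i| + ∑ i ∈ Iᶜ, |xh i| :=
    (Finset.sum_add_sum_compl I fun i => |xh i|).symm
  have s1 : ∑ i ∈ I, |x i| - ∑ i ∈ I, Real.sign (x i) * (x i - xh i)
      ≤ ∑ i ∈ I, |xh i| := by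
    rw [← Finset.sum_sub_distrib]
    refine Finset.sum_le_sum fun i _ => ?_
    have h1 : Real.sign (x i) * x i = |x i| := sign_mul_self' _
    have h2 : Real.sign (x i) * xh i ≤ |xh i| := by
      calc Real.sign (x i) * xh i ≤ |Real.sign (x i) * xh i| := le_abs_self _
        _ = |Real.sign (x i)| * |xh i| := abs_mul _ _
        _ ≤ 1 * |xh i| :=
            mul_le_mul_of_nonneg_right (abs_sign_le_one' _) (abs_nonneg _)
        _ = |xh i| := one_mul _
    have h3 : Real.sign (x i) * (x i - xh i)
        = Real.sign (x i) * x i - Real.sign (x i) * xh i := mul_sub _ _ _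
    linarith
  have s2 : ∑ i ∈ Iᶜ, |x i - xh i| - ∑ i ∈ Iᶜ, |x i| ≤ ∑ i ∈ Iᶜ, |xh i| := by
    rw [← Finset.sum_sub_distrib]
    refine Finset.sum_le_sum fun i _ => ?_
    have := abs_sub (x i) (xh i)
    linarith
  rw [l1_restr, l1_restr]
  have hsub : ∀ i ∈ Iᶜ, |(x - xh) i| = |x i - xh i| := fun i _ => rfl
  rw [Finset.sum_congr rfl hsub]
  linarith [hmin]
end
end

section
/- Suppose Φ is (k,δ,ε)-StRIP and (k,δ,α,ε²)-WSINC with α = (1−δ)²/(8·log(2N/ε)) and g(δ,t) = exp(−(1−δ)²/(8t²)). For a k-subset I with Φ_I^T Φ_I invertible and a sign vector ζ ∈ {−1,+1}^I, define v(ζ,I) = Φ^T Φ_I (Φ_I^T Φ_I)^{−1} ζ, and let p(I) be the probability, over i.i.d. uniform signs ζ, that ‖v(ζ,I)_{I^c}‖_∞ > 1/2. Then a uniformly random k-subset I of {1,…,N} satisfies p(I) > ε with probability less than 3ε. -/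
open Finset Matrix

open scoped Classical

noncomputable section

variable {m N : ℕ}

/-- The set of pairs `(I, i)` with `I` a `k`-subset of `[N]` and `i ∉ I`. -/
def pairsFinset (N k : ℕ) : Finset (Finset (Fin N) × Fin N) :=
  (Finset.powersetCard k (univ : Finset (Fin N)) ×ˢ (univ : Finset (Fin N))).filter
    fun p => p.2 ∉ p.1

/-- `Φ` is `(k,δ,α,ε)`-WSINC with weight `g(δ,t) = exp(−(1−δ)²/(8t²))`. -/
def WSINC (Φ : Matrix (Fin m) (Fin N) ℝ) (k : ℕ) (δ α ε : ℝ) : Prop :=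
  (∑ p ∈ pairsFinset N k,
      if ∃ i ∉ p.1, α < sincSq Φ p.1 i then
        Real.exp (-(1 - δ) ^ 2 / (8 * sincSq Φ p.1 p.2))
      else 0) / ((pairsFinset N k).card : ℝ) ≤ ε / ((N : ℝ) - k)

/-- The ±1 vector on `I` associated with a Boolean vector. -/
def signVec {I : Finset (Fin N)} (b : {i // i ∈ I} → Bool) : {i // i ∈ I} → ℝ :=
  fun j => if b j then 1 else -1

/-- The dual certificate `v(ζ,I) = Φᵀ Φ_I (Φ_Iᵀ Φ_I)⁻¹ ζ`. -/
def vvec (Φ : Matrix (Fin m) (Fin N) ℝ) (I : Finset (Fin N)) (ζ : {i // i ∈ I} → ℝ) :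
    Fin N → ℝ :=
  Φᵀ.mulVec ((colSub Φ I).mulVec ((gram Φ I)⁻¹.mulVec ζ))

/-- `p(I)`: the probability, over i.i.d. uniform signs `ζ` on `I`, that
`‖v(ζ,I)_{I^c}‖_∞ > 1/2`. -/
def pBad (Φ : Matrix (Fin m) (Fin N) ℝ) (I : Finset (Fin N)) : ℝ :=
  (((univ : Finset ({i // i ∈ I} → Bool)).filter
      (fun b => ∃ i ∉ I, 1 / 2 < |vvec Φ I (signVec b) i|)).card : ℝ) /
    ((univ : Finset ({i // i ∈ I} → Bool)).card : ℝ)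


/-!
Fix a support `I` with `‖Φ_IᵀΦ_I − Id‖ ≤ δ`. Then `v(ζ,I)_i = ⟨(Φ_IᵀΦ_I)⁻¹ Φ_Iᵀ φ_i, ζ⟩` is a
Rademacher sum whose coefficient vector has squared norm at most `‖Φ_Iᵀ φ_i‖² / (1 − δ)²`, so
Hoeffding's inequality gives `P(|v_i| > 1/2) ≤ 2 exp(−(1 − δ)² / (8 ‖Φ_Iᵀ φ_i‖²))`.
If moreover `I ∉ A_α`, a union bound over the indices `i ∉ I` and the choice of `α` give
`p(I) ≤ ε`. Every other support either violates the StRIP bound (probability at most `ε`) or lies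
in `A_α`; there the summed Hoeffding bounds are exactly the WSINC sum, so `p` has mean at most
`2ε²` over `A_α` and Markov's inequality leaves probability less than `2ε` for `p(I) > ε`.
-/
open Real

lemma Finset.card_filter_mul_lt_of_sum_le {ι : Type*} {s : Finset ι} {f : ι → ℝ} {c B : ℝ}
    (hf : ∀ x ∈ s, 0 ≤ f x) (hsum : ∑ x ∈ s, f x ≤ B) (hB : 0 < B) :
    #{x ∈ s | c < f x} * c < B := by
  rcases eq_empty_or_nonempty {x ∈ s | c < f x} with hempty | hne
  · simpa [hempty] using hB
  calc #{x ∈ s | c < f x} * c = ∑ x ∈ s with c < f x, c := by rw [sum_const, nsmul_eq_mul]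
    _ < ∑ x ∈ s with c < f x, f x := sum_lt_sum_of_nonempty hne fun x hx => (mem_filter.1 hx).2
    _ ≤ ∑ x ∈ s, f x := sum_le_sum_of_subset_of_nonneg (filter_subset _ _) fun x hx _ => hf x hx
    _ ≤ B := hsum

section SpectralNorm

variable {α β : Type*} [Fintype α] [Fintype β]

lemma norm_toLp_eq_sqrt (x : β → ℝ) : ‖WithLp.toLp 2 x‖ = √(∑ j, x j ^ 2) := by
  simp [EuclideanSpace.norm_eq]

lemma norm_toLp_mulVec_le_specNorm (A : Matrix α β ℝ) {x : β → ℝ}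
    (hx : ‖WithLp.toLp 2 x‖ ≤ 1) :
    ‖WithLp.toLp 2 (A *ᵥ x)‖ ≤ specNorm A := by
  have hbdd : BddAbove {t : ℝ | ∃ x : β → ℝ, (∑ j, x j ^ 2) ≤ 1 ∧
      t = √(∑ i, (∑ j, A i j * x j) ^ 2)} := by
    open scoped Matrix.Norms.L2Operator in
    refine ⟨‖A‖, ?_⟩
    rintro t ⟨y, hy, rfl⟩
    have hy' : ‖WithLp.toLp 2 y‖ ≤ 1 := by rwa [norm_toLp_eq_sqrt, Real.sqrt_le_one]
    calc √(∑ i, (∑ j, A i j * y j) ^ 2) = ‖WithLp.toLp 2 (A *ᵥ y)‖ := by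
          rw [norm_toLp_eq_sqrt]; rfl
      _ ≤ ‖A‖ * ‖WithLp.toLp 2 y‖ := A.l2_opNorm_mulVec (WithLp.toLp 2 y)
      _ ≤ ‖A‖ := mul_le_of_le_one_right (norm_nonneg A) hy'
  refine le_csSup hbdd ⟨x, ?_, ?_⟩
  · rwa [norm_toLp_eq_sqrt, Real.sqrt_le_one] at hx
  · rw [norm_toLp_eq_sqrt]; rfl

lemma norm_toLp_mulVec_le_of_specNorm_le {A : Matrix α β ℝ} {δ : ℝ} (h : specNorm A ≤ δ)
    (x : β → ℝ) : ‖WithLp.toLp 2 (A *ᵥ x)‖ ≤ δ * ‖WithLp.toLp 2 x‖ := by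
  rcases eq_or_ne x 0 with rfl | hx
  · simp
  have hpos : 0 < ‖WithLp.toLp 2 x‖ := by simpa using hx
  have hunit : ‖WithLp.toLp 2 (‖WithLp.toLp 2 x‖⁻¹ • x)‖ ≤ 1 := by
    rw [WithLp.toLp_smul, norm_smul, norm_inv, norm_norm, inv_mul_cancel₀ hpos.ne']
  have := (norm_toLp_mulVec_le_specNorm A hunit).trans h
  rw [Matrix.mulVec_smul, WithLp.toLp_smul, norm_smul, norm_inv, norm_norm,
    inv_mul_le_iff₀ hpos] at this
  linarith

end SpectralNorm

section NearIdentity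

variable {κ : Type*} [Fintype κ] [DecidableEq κ]

lemma mul_norm_toLp_le_norm_toLp_mulVec {G : Matrix κ κ ℝ} {δ : ℝ} (h : specNorm (G - 1) ≤ δ)
    (w : κ → ℝ) : (1 - δ) * ‖WithLp.toLp 2 w‖ ≤ ‖WithLp.toLp 2 (G *ᵥ w)‖ := by
  have hw : w = G *ᵥ w - (G - 1) *ᵥ w := by
    rw [Matrix.sub_mulVec, Matrix.one_mulVec, sub_sub_cancel]
  have htri : ‖WithLp.toLp 2 w‖ ≤ ‖WithLp.toLp 2 (G *ᵥ w)‖ + ‖WithLp.toLp 2 ((G - 1) *ᵥ w)‖ := by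
    conv_lhs => rw [hw]
    rw [WithLp.toLp_sub]
    exact norm_sub_le _ _
  linarith [norm_toLp_mulVec_le_of_specNorm_le h w]

lemma isUnit_det_of_specNorm_sub_one_lt {G : Matrix κ κ ℝ} {δ : ℝ} (h : specNorm (G - 1) ≤ δ)
    (hδ : δ < 1) : IsUnit G.det := by
  rw [← Matrix.isUnit_iff_isUnit_det, ← Matrix.mulVec_injective_iff_isUnit]
  refine (injective_iff_map_eq_zero (Matrix.mulVecLin G)).2 fun w hGw => ?_
  have := mul_norm_toLp_le_norm_toLp_mulVec h w
  rw [← Matrix.mulVecLin_apply, hGw, WithLp.toLp_zero, norm_zero] at this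
  have hw : ‖WithLp.toLp 2 w‖ = 0 :=
    le_antisymm (nonpos_of_mul_nonpos_right this (sub_pos.2 hδ)) (norm_nonneg _)
  simpa using hw

lemma mul_norm_toLp_inv_mulVec_le {G : Matrix κ κ ℝ} {δ : ℝ} (h : specNorm (G - 1) ≤ δ)
    (hδ : δ < 1) (u : κ → ℝ) : (1 - δ) * ‖WithLp.toLp 2 (G⁻¹ *ᵥ u)‖ ≤ ‖WithLp.toLp 2 u‖ := by
  simpa [Matrix.mulVec_mulVec, Matrix.mul_nonsing_inv _ (isUnit_det_of_specNorm_sub_one_lt h hδ)]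
    using mul_norm_toLp_le_norm_toLp_mulVec h (G⁻¹ *ᵥ u)

end NearIdentity

section Rademacher

variable {κ : Type*} [Fintype κ] [DecidableEq κ]

lemma sum_exp_sum_mul_sign_le (c : κ → ℝ) :
    ∑ b : κ → Bool, exp (∑ j, c j * if b j then 1 else -1)
      ≤ 2 ^ Fintype.card κ * exp (∑ j, c j ^ 2 / 2) := by
  calc ∑ b : κ → Bool, exp (∑ j, c j * if b j then 1 else -1)
      = ∏ j, ∑ y : Bool, exp (c j * if y then 1 else -1) := by
        rw [Fintype.prod_sum]; simp only [exp_sum]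
    _ = ∏ j, 2 * cosh (c j) := by
        simp [cosh_eq, mul_div_cancel₀]
    _ ≤ ∏ j, 2 * exp (c j ^ 2 / 2) := by
        gcongr with j
        exact cosh_le_exp_half_sq _
    _ = 2 ^ Fintype.card κ * exp (∑ j, c j ^ 2 / 2) := by
        rw [prod_mul_distrib, prod_const, card_univ, exp_sum]

lemma card_filter_lt_sum_mul_sign_le (w : κ → ℝ) {t v : ℝ} (ht : 0 ≤ t)
    (hw : ∑ j, w j ^ 2 ≤ v) :
    (#{b : κ → Bool | t < ∑ j, w j * if b j then 1 else -1} : ℝ)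
      ≤ 2 ^ Fintype.card κ * exp (-t ^ 2 / (2 * v)) := by
  set X : (κ → Bool) → ℝ := fun b => ∑ j, w j * if b j then 1 else -1
  set s := t / v
  have hs : 0 ≤ s := div_nonneg ht ((sum_nonneg fun j _ => sq_nonneg (w j)).trans hw)
  calc (#{b : κ → Bool | t < X b} : ℝ)
      ≤ ∑ b, exp (s * (X b - t)) := by
        rw [card_eq_sum_ones, Nat.cast_sum, Nat.cast_one]
        refine (sum_le_sum fun b hb => one_le_exp
          (mul_nonneg hs (sub_nonneg.2 (mem_filter.1 hb).2.le))).trans ?_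
        exact sum_le_sum_of_subset_of_nonneg (filter_subset _ _) fun _ _ _ => (exp_pos _).le
    _ = exp (-(s * t)) * ∑ b : κ → Bool, exp (∑ j, s * w j * if b j then 1 else -1) := by
        rw [mul_sum]
        refine sum_congr rfl fun b _ => ?_
        rw [← exp_add, neg_add_eq_sub]
        simp only [X, mul_sub, mul_sum, mul_assoc]
    _ ≤ exp (-(s * t)) * (2 ^ Fintype.card κ * exp (∑ j, (s * w j) ^ 2 / 2)) := by
        gcongr
        exact sum_exp_sum_mul_sign_le _
    _ = 2 ^ Fintype.card κ * exp (-(s * t) + s ^ 2 / 2 * ∑ j, w j ^ 2) := by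
        rw [mul_left_comm, ← exp_add, mul_sum]
        simp only [mul_pow, mul_div_right_comm]
    _ ≤ 2 ^ Fintype.card κ * exp (-(s * t) + s ^ 2 / 2 * v) := by
        gcongr
    _ = 2 ^ Fintype.card κ * exp (-t ^ 2 / (2 * v)) := by
        rcases eq_or_ne v 0 with rfl | hv
        · simp [s]
        · congr 2
          simp only [s]
          field_simp
          ring

lemma card_filter_lt_abs_sum_mul_sign_le (w : κ → ℝ) {t v : ℝ} (ht : 0 ≤ t)
    (hw : ∑ j, w j ^ 2 ≤ v) :
    (#{b : κ → Bool | t < |∑ j, w j * if b j then 1 else -1|} : ℝ)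
      ≤ 2 * (2 ^ Fintype.card κ * exp (-t ^ 2 / (2 * v))) := by
  have hw' : ∑ j, (-w j) ^ 2 ≤ v := by simpa only [neg_sq] using hw
  calc (#{b : κ → Bool | t < |∑ j, w j * if b j then 1 else -1|} : ℝ)
      ≤ #{b : κ → Bool | t < ∑ j, w j * if b j then 1 else -1}
        + #{b : κ → Bool | t < ∑ j, -w j * if b j then 1 else -1} := by
        rw [← Nat.cast_add]
        refine Nat.cast_le.2 ((card_le_card fun b => ?_).trans (card_union_le _ _))
        simp only [mem_union, mem_filter_univ, lt_abs, neg_mul, sum_neg_distrib, imp_self]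
    _ ≤ 2 * (2 ^ Fintype.card κ * exp (-t ^ 2 / (2 * v))) := by
        linarith [card_filter_lt_sum_mul_sign_le w ht hw,
          card_filter_lt_sum_mul_sign_le (fun j => -w j) ht hw']

end Rademacher

section Certificate

lemma sincSq_eq_sum_sq (Φ : Matrix (Fin m) (Fin N) ℝ) (I : Finset (Fin N)) (i : Fin N) :
    sincSq Φ I i = ∑ j, ((colSub Φ I)ᵀ *ᵥ Φᵀ i) j ^ 2 :=
  (sum_coe_sort I _).symm

lemma vvec_apply (Φ : Matrix (Fin m) (Fin N) ℝ) (I : Finset (Fin N)) (ζ : {i // i ∈ I} → ℝ)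
    (i : Fin N) : vvec Φ I ζ i = (gram Φ I)⁻¹ *ᵥ ((colSub Φ I)ᵀ *ᵥ Φᵀ i) ⬝ᵥ ζ := by
  have hsymm : (gram Φ I)ᵀ = gram Φ I := by
    rw [_root_.gram, transpose_mul, transpose_transpose]
  rw [vvec, mulVec, dotProduct_mulVec, dotProduct_mulVec, ← mulVec_transpose,
    ← mulVec_transpose, transpose_nonsing_inv, hsymm]

/-- No positivity of `a` is needed: at `a = 0` the bound reads `2 * 2 ^ #I`, as `x / 0 = 0`. -/
lemma card_signs_lt_abs_vvec_le {Φ : Matrix (Fin m) (Fin N) ℝ} {I : Finset (Fin N)} {δ a : ℝ}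
    (hδ : δ < 1) (hRIP : specNorm (gram Φ I - 1) ≤ δ) {i : Fin N} (ha : sincSq Φ I i ≤ a) :
    (#{b | 1 / 2 < |vvec Φ I (signVec b) i|} : ℝ)
      ≤ 2 * (2 ^ #I * exp (-(1 - δ) ^ 2 / (8 * a))) := by
  set w := (gram Φ I)⁻¹ *ᵥ ((colSub Φ I)ᵀ *ᵥ Φᵀ i)
  have hw : ∑ j, w j ^ 2 ≤ a / (1 - δ) ^ 2 := by
    have hnorm := mul_norm_toLp_inv_mulVec_le hRIP hδ ((colSub Φ I)ᵀ *ᵥ Φᵀ i)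
    have hsq := pow_le_pow_left₀ (by nlinarith [norm_nonneg (WithLp.toLp 2 w)]) hnorm 2
    rw [mul_pow, EuclideanSpace.real_norm_sq_eq, EuclideanSpace.real_norm_sq_eq,
      ← sincSq_eq_sum_sq] at hsq
    rw [le_div_iff₀ (by nlinarith), mul_comm]
    exact hsq.trans ha
  have hexp : -(1 / 2 : ℝ) ^ 2 / (2 * (a / (1 - δ) ^ 2)) = -(1 - δ) ^ 2 / (8 * a) := by
    rw [mul_div_assoc', div_div_eq_mul_div]; ring
  have := card_filter_lt_abs_sum_mul_sign_le w (by norm_num : (0 : ℝ) ≤ 1 / 2) hw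
  rw [hexp, Fintype.card_coe] at this
  simpa only [vvec_apply, dotProduct, signVec] using this

lemma pBad_le_sum {Φ : Matrix (Fin m) (Fin N) ℝ} {I : Finset (Fin N)} {δ : ℝ} (hδ : δ < 1)
    (hRIP : specNorm (gram Φ I - 1) ≤ δ) {a : Fin N → ℝ} (ha : ∀ i ∉ I, sincSq Φ I i ≤ a i) :
    pBad Φ I ≤ ∑ i ∈ Iᶜ, 2 * exp (-(1 - δ) ^ 2 / (8 * a i)) := by
  have hcard : ((univ : Finset ({i // i ∈ I} → Bool)).card : ℝ) = 2 ^ #I := by simp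
  have hunion : ({b | ∃ i ∉ I, 1 / 2 < |vvec Φ I (signVec b) i|} : Finset (I → Bool))
      ⊆ Iᶜ.biUnion fun i => {b | 1 / 2 < |vvec Φ I (signVec b) i|} := by
    intro b
    simp
  rw [pBad, hcard, div_le_iff₀ (by positivity), sum_mul]
  calc (#{b | ∃ i ∉ I, 1 / 2 < |vvec Φ I (signVec b) i|} : ℝ)
      ≤ ∑ i ∈ Iᶜ, (#{b | 1 / 2 < |vvec Φ I (signVec b) i|} : ℝ) := by
        exact_mod_cast (card_le_card hunion).trans card_biUnion_le
    _ ≤ ∑ i ∈ Iᶜ, 2 * exp (-(1 - δ) ^ 2 / (8 * a i)) * 2 ^ #I := by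
        refine sum_le_sum fun i hi => ?_
        linarith [card_signs_lt_abs_vvec_le hδ hRIP (ha i (mem_compl.1 hi))]

lemma pBad_le_of_forall_sincSq_le {Φ : Matrix (Fin m) (Fin N) ℝ} {I : Finset (Fin N)} {δ α : ℝ}
    (hδ : δ < 1) (hRIP : specNorm (gram Φ I - 1) ≤ δ) (hα : ∀ i ∉ I, sincSq Φ I i ≤ α) :
    pBad Φ I ≤ 2 * N * exp (-(1 - δ) ^ 2 / (8 * α)) := by
  refine (pBad_le_sum hδ hRIP (a := fun _ => α) hα).trans ?_
  rw [sum_const, nsmul_eq_mul, ← mul_assoc, mul_comm (#Iᶜ : ℝ)]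
  gcongr
  exact_mod_cast (card_le_univ Iᶜ).trans (Fintype.card_fin N).le

lemma pBad_nonneg (Φ : Matrix (Fin m) (Fin N) ℝ) (I : Finset (Fin N)) : 0 ≤ pBad Φ I := by
  unfold pBad
  positivity

end Certificate

section RandomSupport

lemma sum_pairsFinset {M : Type*} [AddCommMonoid M] (k : ℕ) (f : Finset (Fin N) × Fin N → M) :
    ∑ p ∈ pairsFinset N k, f p = ∑ I ∈ powersetCard k univ, ∑ i ∈ Iᶜ, f (I, i) := by
  rw [pairsFinset, sum_filter, sum_product]
  refine sum_congr rfl fun I _ => ?_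
  rw [← sum_filter]
  congr 1
  ext i
  simp

lemma card_pairsFinset (k : ℕ) :
    #(pairsFinset N k) = #(powersetCard k (univ : Finset (Fin N))) * (N - k) := by
  rw [card_eq_sum_ones, sum_pairsFinset, ← smul_eq_mul, ← sum_const]
  refine sum_congr rfl fun I hI => ?_
  rw [← card_eq_sum_ones, card_compl, Fintype.card_fin, (mem_powersetCard_univ.1 hI)]

lemma StRIP.card_filter_not_le {Φ : Matrix (Fin m) (Fin N) ℝ} {k : ℕ} {δ ε : ℝ}
    (h : StRIP Φ k δ ε) :
    (#{I ∈ powersetCard k univ | ¬ specNorm (gram Φ I - 1) ≤ δ} : ℝ)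
      ≤ ε * #(powersetCard k (univ : Finset (Fin N))) := by
  have hsplit := card_filter_add_card_filter_not (s := powersetCard k (univ : Finset (Fin N)))
    (fun I => specNorm (gram Φ I - 1) ≤ δ)
  rw [StRIP] at h
  have hsplit' : (#{I ∈ powersetCard k univ | specNorm (gram Φ I - 1) ≤ δ} : ℝ)
      + #{I ∈ powersetCard k univ | ¬ specNorm (gram Φ I - 1) ≤ δ}
      = #(powersetCard k (univ : Finset (Fin N))) := by exact_mod_cast hsplit
  linarith

lemma WSINC.sum_le {Φ : Matrix (Fin m) (Fin N) ℝ} {k : ℕ} {δ α ε : ℝ} (h : WSINC Φ k δ α ε)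
    (hkN : k < N) :
    ∑ I ∈ powersetCard k univ with ∃ i ∉ I, α < sincSq Φ I i,
        ∑ i ∈ Iᶜ, exp (-(1 - δ) ^ 2 / (8 * sincSq Φ I i))
      ≤ ε * #(powersetCard k (univ : Finset (Fin N))) := by
  have hP : (0 : ℝ) < #(powersetCard k (univ : Finset (Fin N))) := by
    exact_mod_cast card_pos.2 (powersetCard_nonempty.2 (by simpa using hkN.le))
  have hNk : (0 : ℝ) < N - k := sub_pos.2 (by exact_mod_cast hkN)
  rw [WSINC, sum_pairsFinset, card_pairsFinset, Nat.cast_mul, Nat.cast_sub hkN.le,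
    div_le_div_iff₀ (by positivity) hNk] at h
  rw [sum_filter]
  simp only [sum_ite_irrel, sum_const_zero] at h
  nlinarith

lemma sum_pBad_le {Φ : Matrix (Fin m) (Fin N) ℝ} {k : ℕ} {δ α ε : ℝ} (hkN : k < N) (hδ : δ < 1)
    (h : WSINC Φ k δ α ε) :
    ∑ I ∈ powersetCard k univ with specNorm (gram Φ I - 1) ≤ δ ∧ ∃ i ∉ I, α < sincSq Φ I i,
        pBad Φ I
      ≤ 2 * ε * #(powersetCard k (univ : Finset (Fin N))) := by
  calc ∑ I ∈ powersetCard k univ with specNorm (gram Φ I - 1) ≤ δ ∧ ∃ i ∉ I, α < sincSq Φ I i,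
        pBad Φ I
      ≤ ∑ I ∈ powersetCard k univ with specNorm (gram Φ I - 1) ≤ δ ∧ ∃ i ∉ I, α < sincSq Φ I i,
          ∑ i ∈ Iᶜ, 2 * exp (-(1 - δ) ^ 2 / (8 * sincSq Φ I i)) :=
        sum_le_sum fun I hI => pBad_le_sum hδ (mem_filter.1 hI).2.1 fun i _ => le_rfl
    _ ≤ 2 * ∑ I ∈ powersetCard k univ with ∃ i ∉ I, α < sincSq Φ I i,
          ∑ i ∈ Iᶜ, exp (-(1 - δ) ^ 2 / (8 * sincSq Φ I i)) := by
        simp only [← mul_sum]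
        gcongr 2 * ?_
        refine sum_le_sum_of_subset_of_nonneg (monotone_filter_right _ fun _ _ h => h.2)
          fun I _ _ => sum_nonneg fun i _ => (exp_pos _).le
    _ ≤ 2 * ε * #(powersetCard k (univ : Finset (Fin N))) := by
        rw [mul_assoc]
        gcongr
        exact h.sum_le hkN

end RandomSupport

theorem stmt5_general (m N k : ℕ) (hkN : k < N) (δ ε : ℝ)
    (hδ1 : δ < 1) (hε0 : 0 < ε)
    (Φ : Matrix (Fin m) (Fin N) ℝ)
    (hStRIP : StRIP Φ k δ ε)
    (hWSINC : WSINC Φ k δ ((1 - δ) ^ 2 / (8 * Real.log (2 * N / ε))) (ε ^ 2)) :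
    (((Finset.powersetCard k (univ : Finset (Fin N))).filter
        (fun I => ε < pBad Φ I)).card : ℝ) <
      3 * ε * ((Finset.powersetCard k (univ : Finset (Fin N))).card : ℝ) := by
  set P := powersetCard k (univ : Finset (Fin N))
  set α := (1 - δ) ^ 2 / (8 * Real.log (2 * N / ε))
  have hN : (0 : ℝ) < N := by exact_mod_cast k.zero_le.trans_lt hkN
  have hP : (0 : ℝ) < #P := by
    exact_mod_cast card_pos.2 (powersetCard_nonempty.2 (by simpa using hkN.le))
  have hα : 2 * N * exp (-(1 - δ) ^ 2 / (8 * α)) = ε := by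
    have h1δ : (1 - δ) ^ 2 ≠ 0 := by nlinarith
    have h8α : 8 * α = (1 - δ) ^ 2 / Real.log (2 * N / ε) := by simp only [α]; ring
    rw [h8α, neg_div, div_div_eq_mul_div, mul_div_cancel_left₀ _ h1δ, Real.exp_neg,
      Real.exp_log (by positivity)]
    field_simp
  set S := {I ∈ P | specNorm (gram Φ I - 1) ≤ δ ∧ ∃ i ∉ I, α < sincSq Φ I i}
  have hcover : {I ∈ P | ε < pBad Φ I}
      ⊆ {I ∈ P | ¬ specNorm (gram Φ I - 1) ≤ δ} ∪ {I ∈ S | ε < pBad Φ I} := by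
    intro I
    simp only [mem_union, mem_filter, S]
    rintro ⟨hIP, hbad⟩
    by_cases hRIP : specNorm (gram Φ I - 1) ≤ δ
    · refine Or.inr ⟨⟨hIP, hRIP, ?_⟩, hbad⟩
      by_contra! hA
      linarith [pBad_le_of_forall_sincSq_le hδ1 hRIP hA]
    · exact Or.inl ⟨hIP, hRIP⟩
  have hS : #{I ∈ S | ε < pBad Φ I} * ε < 2 * ε ^ 2 * #P :=
    card_filter_mul_lt_of_sum_le (fun I _ => pBad_nonneg Φ I) (sum_pBad_le hkN hδ1 hWSINC)
      (by positivity)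
  calc (#{I ∈ P | ε < pBad Φ I} : ℝ)
      ≤ #{I ∈ P | ¬ specNorm (gram Φ I - 1) ≤ δ} + #{I ∈ S | ε < pBad Φ I} := by
        exact_mod_cast (card_le_card hcover).trans (card_union_le _ _)
    _ < 3 * ε * #P := by
        nlinarith [hStRIP.card_filter_not_le]

/-- Lemma: `p(I) > ε` holds with probability `< 3ε` over the
choice of the `k`-subset `I`. -/
theorem stmt5 (m N k : ℕ) (hkN : k < N) (δ ε : ℝ)
    (hδ0 : 0 < δ) (hδ1 : δ < 1) (hε0 : 0 < ε) (hε1 : ε < 1)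
    (Φ : Matrix (Fin m) (Fin N) ℝ) (hcols : unitCols Φ)
    (hStRIP : StRIP Φ k δ ε)
    (hWSINC : WSINC Φ k δ ((1 - δ) ^ 2 / (8 * Real.log (2 * N / ε))) (ε ^ 2)) :
    (((Finset.powersetCard k (univ : Finset (Fin N))).filter
        (fun I => ε < pBad Φ I)).card : ℝ) <
      3 * ε * ((Finset.powersetCard k (univ : Finset (Fin N))).card : ℝ) :=
  stmt5_general m N k hkN δ ε hδ1 hε0 Φ hStRIP hWSINC
end
end

section
/- Let Φ have coherence μ and let θ = μ̄² if Φ is coherence-invariant and θ = μ̄²_max otherwise; assume k < N/2 − 1. If θ ≤ a·δ²/k² and μ⁴ ≤ (1−a)²·δ⁴/(32·k³·log(2k/ε₁)) for some constant 0 < a < 1, then Φ is (k,δ,ε₁)-StRIP. -/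
open Finset Matrix

open scoped Classical

noncomputable section

variable {m N : ℕ}

/-- Inner product of columns `i` and `j` of `Φ`. -/
def ip (Φ : Matrix (Fin m) (Fin N) ℝ) (i j : Fin N) : ℝ := ∑ r, Φ r i * Φ r j

/-- Mean square coherence `μ̄² = (1/(N(N−1))) Σ_{i≠j} μ_ij²`. -/
def mu2bar (Φ : Matrix (Fin m) (Fin N) ℝ) : ℝ :=
  (∑ i, ∑ j ∈ (univ : Finset (Fin N)).erase i, (ip Φ i j) ^ 2) / ((N : ℝ) * ((N : ℝ) - 1))

/-- Maximum average square coherence `μ̄²_max = max_j (1/(N−1)) Σ_{i≠j} μ_ij²`. -/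
def mu2max (Φ : Matrix (Fin m) (Fin N) ℝ) : ℝ :=
  sSup {t : ℝ | ∃ j : Fin N,
    t = (∑ i ∈ (univ : Finset (Fin N)).erase j, (ip Φ i j) ^ 2) / ((N : ℝ) - 1)}

/-- `Φ` is coherence-invariant: the multiset `{μ_ij : j ≠ i}` does not depend on `i`. -/
def CoherenceInvariant (Φ : Matrix (Fin m) (Fin N) ℝ) : Prop :=
  ∀ i i' : Fin N,
    Multiset.map (fun j => |ip Φ i j|) ((univ : Finset (Fin N)).erase i).val =
    Multiset.map (fun j => |ip Φ i' j|) ((univ : Finset (Fin N)).erase i').val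

/-!
If every row of `Φ_Iᵀ Φ_I − Id` has squared ℓ₂ norm at most `δ²/k`, its Frobenius norm, and so
its spectral norm, is at most `δ`. By a union bound over the row index `i`, it is enough that a
uniformly random `(k-1)`-subset `S` of the other columns has `∑_{j ∈ S} μ_ij² > δ²/k` with
probability at most `ε₁/(2k)`. This is a Chernoff bound for sampling without replacement: for
`0 ≤ c_j ≤ M` and `l M ≤ 1`, the exponential moment `∑_{|S| = r} exp (l ∑_{j ∈ S} c_j)` is at most
`C(n, r) exp (l r c̄ + r l² M²)`, by induction on `r`, removing one element of `S` at a time and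
using `exp u ≤ 1 + u + u²` on `[0, 1]`. Here `c̄ ≤ θ` by the hypothesis on `θ`, `M = μ²`, and
`l = (1-a)δ²/(2k²μ⁴)` minimises the resulting exponent; when `l μ² > 1` the coherence alone
already gives `(k-1) μ² < δ²/k`.
-/

open Real

section Chernoff

variable {ι : Type*}

theorem sum_exp_mul_le_card_mul_exp (A : Finset ι) (c : ι → ℝ) {M s : ℝ} (hs : 0 ≤ s)
    (hsM : s * M ≤ 1) (hc : ∀ j ∈ A, 0 ≤ c j ∧ c j ≤ M) :
    ∑ j ∈ A, exp (s * c j) ≤ #A * exp (s * ((∑ j ∈ A, c j) / #A) + s ^ 2 * M ^ 2) := by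
  rcases A.eq_empty_or_nonempty with rfl | hA
  · simp
  have hterm : ∀ j ∈ A, exp (s * c j) ≤ 1 + s * c j + s ^ 2 * M ^ 2 := by
    intro j hj
    obtain ⟨hc0, hcM⟩ := hc j hj
    have hsc : |s * c j| ≤ 1 := by
      rw [abs_of_nonneg (by positivity)]
      exact (mul_le_mul_of_nonneg_left hcM hs).trans hsM
    have hsq : (s * c j) ^ 2 ≤ s ^ 2 * M ^ 2 := by
      rw [← mul_pow]; exact pow_le_pow_left₀ (by positivity) (mul_le_mul_of_nonneg_left hcM hs) 2
    linarith [(abs_le.mp (abs_exp_sub_one_sub_id_le hsc)).2]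
  have hcard : (0 : ℝ) < #A := by exact_mod_cast hA.card_pos
  calc ∑ j ∈ A, exp (s * c j) ≤ ∑ j ∈ A, (1 + s * c j + s ^ 2 * M ^ 2) := sum_le_sum hterm
    _ = #A * (s * ((∑ j ∈ A, c j) / #A) + s ^ 2 * M ^ 2 + 1) := by
      simp only [sum_add_distrib, sum_const, nsmul_eq_mul, ← mul_sum]
      field_simp
      ring
    _ ≤ #A * exp (s * ((∑ j ∈ A, c j) / #A) + s ^ 2 * M ^ 2) :=
      mul_le_mul_of_nonneg_left (add_one_le_exp _) hcard.le

variable [DecidableEq ι]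

theorem sum_sum_powersetCard_erase_insert {β : Type*} [AddCommMonoid β] (A : Finset ι) (r : ℕ)
    (g : Finset ι → β) :
    ∑ j ∈ A, ∑ S ∈ powersetCard r (A.erase j), g (insert j S) =
      (r + 1) • ∑ T ∈ powersetCard (r + 1) A, g T := by
  have hinner : ∀ j ∈ A, ∑ S ∈ powersetCard r (A.erase j), g (insert j S) =
      ∑ T ∈ powersetCard (r + 1) A with j ∈ T, g T := by
    intro j hj
    refine sum_nbij' (insert j) (·.erase j) ?_ ?_ ?_ ?_ (fun _ _ => rfl)
    · intro S hS
      obtain ⟨hSA, hS⟩ := mem_powersetCard.mp hS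
      have hjS : j ∉ S := fun h => by simpa using hSA h
      simp only [mem_filter, mem_powersetCard, mem_insert_self, and_true]
      exact ⟨insert_subset hj (hSA.trans (erase_subset _ _)), by rw [card_insert_of_notMem hjS, hS]⟩
    · intro T hT
      obtain ⟨⟨hTA, hT⟩, hjT⟩ := by simpa only [mem_filter, mem_powersetCard] using hT
      exact mem_powersetCard.mpr ⟨erase_subset_erase j hTA, by rw [card_erase_of_mem hjT, hT]; rfl⟩
    · intro S hS
      exact erase_insert fun h => by simpa using (mem_powersetCard.mp hS).1 h
    · intro T hT
      exact insert_erase (mem_filter.mp hT).2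
  rw [sum_congr rfl hinner, sum_comm' (t' := powersetCard (r + 1) A) (s' := fun T => T), smul_sum]
  · refine sum_congr rfl fun T hT => ?_
    rw [sum_const, (mem_powersetCard.mp hT).2]
  · intro j T
    simp only [mem_filter, mem_powersetCard]
    exact ⟨fun h => ⟨h.2.2, h.2.1⟩, fun h => ⟨h.2.1 h.1, h.2, h.1⟩⟩

theorem mul_sum_powersetCard_succ_exp_eq (c : ι → ℝ) (l : ℝ) (r : ℕ) (A : Finset ι) :
    (r + 1 : ℝ) * ∑ S ∈ powersetCard (r + 1) A, exp (l * ∑ j ∈ S, c j) =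
      ∑ j ∈ A, exp (l * c j) * ∑ S ∈ powersetCard r (A.erase j), exp (l * ∑ x ∈ S, c x) := by
  rw [← Nat.cast_succ, ← nsmul_eq_mul, ← sum_sum_powersetCard_erase_insert]
  refine sum_congr rfl fun j _ => ?_
  rw [mul_sum]
  refine sum_congr rfl fun S hS => ?_
  have hjS : j ∉ S := fun h => by simpa using (mem_powersetCard.mp hS).1 h
  rw [sum_insert hjS, mul_add, exp_add]

theorem chernoff_step_exponent_le {l s M T : ℝ} {r m : ℕ} (hrm : (r : ℝ) ≤ m)
    (hs : s = l * (1 - r / m)) (hs0 : 0 ≤ s) (hsl : s ≤ l) :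
    l * r * (T / m) + r * l ^ 2 * M ^ 2 + (s * (T / (m + 1 : ℕ)) + s ^ 2 * M ^ 2) ≤
      l * (r + 1 : ℕ) * (T / (m + 1 : ℕ)) + (r + 1 : ℕ) * l ^ 2 * M ^ 2 := by
  have hlin : l * r * (T / m) + s * (T / (m + 1 : ℕ)) = l * (r + 1 : ℕ) * (T / (m + 1 : ℕ)) := by
    rcases eq_or_ne (m : ℝ) 0 with hm0 | hm0
    · have hr0 : (r : ℝ) = 0 := by linarith [(Nat.cast_nonneg r : (0 : ℝ) ≤ r)]
      simp [hs, hm0, hr0]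
    · rw [hs]
      push_cast
      field_simp
      ring
  have hsq : s ^ 2 * M ^ 2 ≤ l ^ 2 * M ^ 2 := by gcongr
  push_cast at hlin ⊢
  nlinarith

theorem sum_powersetCard_exp_mul_sum_le (c : ι → ℝ) {M l : ℝ} (hl : 0 ≤ l) (hlM : l * M ≤ 1)
    (r : ℕ) (A : Finset ι) (hc : ∀ j ∈ A, 0 ≤ c j ∧ c j ≤ M) :
    ∑ S ∈ powersetCard r A, exp (l * ∑ j ∈ S, c j) ≤
      (#A).choose r * exp (l * r * ((∑ j ∈ A, c j) / #A) + r * l ^ 2 * M ^ 2) := by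
  induction r generalizing A with
  | zero => simp
  | succ r ih =>
  rcases lt_or_ge #A (r + 1) with hlt | hge
  · simp [powersetCard_eq_empty.mpr hlt, Nat.choose_eq_zero_of_lt hlt]
  obtain ⟨m, hAm⟩ : ∃ m, #A = m + 1 := Nat.exists_eq_add_one_of_ne_zero (by omega)
  have hrm : (r : ℝ) ≤ m := by exact_mod_cast (show r ≤ m by omega)
  obtain ⟨j₀, hj₀⟩ : A.Nonempty := card_pos.mp (by omega)
  have hM : 0 ≤ M := (hc j₀ hj₀).1.trans (hc j₀ hj₀).2
  set T := ∑ j ∈ A, c j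
  -- removing `j` lowers the mean seen by the induction hypothesis, so `c j` keeps weight `s`
  set s := l * (1 - r / m)
  have hr_div : (r : ℝ) / m ≤ 1 := div_le_one_of_le₀ hrm (by positivity)
  have hs0 : 0 ≤ s := mul_nonneg hl (by linarith)
  have hsl : s ≤ l := mul_le_of_le_one_right hl (by linarith [show 0 ≤ (r : ℝ) / m by positivity])
  have hsM : s * M ≤ 1 := (mul_le_mul_of_nonneg_right hsl hM).trans hlM
  have hsplit : (r + 1 : ℝ) * ∑ S ∈ powersetCard (r + 1) A, exp (l * ∑ j ∈ S, c j) ≤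
      (m.choose r * exp (l * r * (T / m) + r * l ^ 2 * M ^ 2)) * ∑ j ∈ A, exp (s * c j) := by
    rw [mul_sum_powersetCard_succ_exp_eq, mul_sum]
    refine sum_le_sum fun j hj => ?_
    have hIH := ih (A.erase j) fun x hx => hc x (mem_of_mem_erase hx)
    rw [card_erase_of_mem hj, hAm, Nat.add_sub_cancel, sum_erase_eq_sub hj] at hIH
    calc exp (l * c j) * ∑ S ∈ powersetCard r (A.erase j), exp (l * ∑ x ∈ S, c x)
        ≤ exp (l * c j) * (m.choose r * exp (l * r * ((T - c j) / m) + r * l ^ 2 * M ^ 2)) := by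
          gcongr
      _ = m.choose r * exp (l * r * (T / m) + r * l ^ 2 * M ^ 2) * exp (s * c j) := by
          rw [mul_left_comm, ← exp_add, mul_assoc (m.choose r : ℝ), ← exp_add]
          congr 2
          simp only [s]
          ring
  have hexp := chernoff_step_exponent_le (M := M) (T := T) hrm rfl hs0 hsl
  rw [← hAm] at hexp
  have hchoose : ((#A : ℕ) : ℝ) * m.choose r = (r + 1 : ℝ) * (#A).choose (r + 1) := by
    rw [hAm]
    exact_mod_cast (Nat.add_one_mul_choose_eq m r).trans (mul_comm _ _)
  have hmgf := sum_exp_mul_le_card_mul_exp A c hs0 hsM hc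
  refine le_of_mul_le_mul_left ?_ (by positivity : (0 : ℝ) < r + 1)
  calc (r + 1 : ℝ) * ∑ S ∈ powersetCard (r + 1) A, exp (l * ∑ j ∈ S, c j)
      ≤ (m.choose r * exp (l * r * (T / m) + r * l ^ 2 * M ^ 2)) *
          (#A * exp (s * (T / #A) + s ^ 2 * M ^ 2)) :=
        hsplit.trans (mul_le_mul_of_nonneg_left hmgf (by positivity))
    _ = (#A * m.choose r) *
          exp (l * r * (T / m) + r * l ^ 2 * M ^ 2 + (s * (T / #A) + s ^ 2 * M ^ 2)) := by
        simp only [exp_add]; ring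
    _ ≤ (#A * m.choose r) *
          exp (l * (r + 1 : ℕ) * (T / #A) + (r + 1 : ℕ) * l ^ 2 * M ^ 2) := by
        gcongr
    _ = (r + 1 : ℝ) * ((#A).choose (r + 1) *
          exp (l * (r + 1 : ℕ) * (T / #A) + (r + 1 : ℕ) * l ^ 2 * M ^ 2)) := by
        rw [hchoose, mul_assoc]

theorem card_filter_lt_sum_le (c : ι → ℝ) {M l : ℝ} (v : ℝ) (hl : 0 ≤ l) (hlM : l * M ≤ 1)
    (r : ℕ) (A : Finset ι) (hc : ∀ j ∈ A, 0 ≤ c j ∧ c j ≤ M) :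
    (#{S ∈ powersetCard r A | v < ∑ j ∈ S, c j} : ℝ) ≤
      (#A).choose r * exp (l * r * ((∑ j ∈ A, c j) / #A) + r * l ^ 2 * M ^ 2 - l * v) := by
  rw [exp_sub, ← mul_div_assoc, le_div_iff₀ (exp_pos _)]
  calc (#{S ∈ powersetCard r A | v < ∑ j ∈ S, c j} : ℝ) * exp (l * v)
      ≤ ∑ S ∈ powersetCard r A with v < ∑ j ∈ S, c j, exp (l * ∑ j ∈ S, c j) := by
        rw [← nsmul_eq_mul]
        exact card_nsmul_le_sum _ _ _ fun S hS =>
          exp_le_exp.mpr (mul_le_mul_of_nonneg_left (mem_filter.mp hS).2.le hl)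
    _ ≤ ∑ S ∈ powersetCard r A, exp (l * ∑ j ∈ S, c j) :=
        sum_le_sum_of_subset_of_nonneg (filter_subset _ _) fun _ _ _ => (exp_pos _).le
    _ ≤ _ := sum_powersetCard_exp_mul_sum_le c hl hlM r A hc

end Chernoff

theorem specNorm_le_sqrt_sum_sq {α β : Type*} [Fintype α] [Fintype β] (A : Matrix α β ℝ) :
    specNorm A ≤ √(∑ i, ∑ j, A i j ^ 2) := by
  refine Real.sSup_le ?_ (sqrt_nonneg _)
  rintro t ⟨x, hx, rfl⟩
  refine sqrt_le_sqrt ?_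
  calc ∑ i, (∑ j, A i j * x j) ^ 2 ≤ ∑ i, (∑ j, A i j ^ 2) * ∑ j, x j ^ 2 :=
        sum_le_sum fun i _ => sum_mul_sq_le_sq_mul_sq _ _ _
    _ ≤ ∑ i, (∑ j, A i j ^ 2) * 1 := by gcongr
    _ = ∑ i, ∑ j, A i j ^ 2 := by simp

theorem ip_comm (Φ : Matrix (Fin m) (Fin N) ℝ) (i j : Fin N) : ip Φ i j = ip Φ j i := by
  simp only [ip, mul_comm]

theorem gram_sub_one_apply {Φ : Matrix (Fin m) (Fin N) ℝ} (hcols : unitCols Φ)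
    (I : Finset (Fin N)) (i j : I) :
    (gram Φ I - 1) i j = if (i : Fin N) = j then 0 else ip Φ i j := by
  have hgram : _root_.gram Φ I i j = ip Φ i j := by
    simp only [_root_.gram, colSub, ip, Matrix.mul_apply, transpose_apply, of_apply]
  rw [Matrix.sub_apply, hgram, one_apply]
  split_ifs with h h' h'
  · simp [ip, ← h, ← sq, hcols (i : Fin N)]
  · exact absurd (congrArg Subtype.val h) h'
  · exact absurd (Subtype.ext h') h
  · ring

theorem sum_sq_gram_sub_one {Φ : Matrix (Fin m) (Fin N) ℝ} (hcols : unitCols Φ)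
    (I : Finset (Fin N)) :
    ∑ i : I, ∑ j : I, (gram Φ I - 1) i j ^ 2 = ∑ i ∈ I, ∑ j ∈ I.erase i, ip Φ i j ^ 2 := by
  simp only [gram_sub_one_apply hcols, ite_pow, zero_pow two_ne_zero]
  rw [← sum_coe_sort I]
  refine sum_congr rfl fun i _ => ?_
  rw [sum_coe_sort I (fun j => if (i : Fin N) = j then 0 else ip Φ i j ^ 2), sum_ite,
    sum_const_zero, zero_add, filter_ne]

theorem specNorm_gram_sub_one_le {Φ : Matrix (Fin m) (Fin N) ℝ} (hcols : unitCols Φ) {δ : ℝ}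
    (hδ : 0 ≤ δ) (I : Finset (Fin N))
    (hI : ∀ i ∈ I, ∑ j ∈ I.erase i, ip Φ i j ^ 2 ≤ δ ^ 2 / #I) :
    specNorm (gram Φ I - 1) ≤ δ := by
  refine (specNorm_le_sqrt_sum_sq _).trans ?_
  rw [sum_sq_gram_sub_one hcols, ← sqrt_sq hδ]
  refine sqrt_le_sqrt ((sum_le_sum hI).trans ?_)
  rcases I.eq_empty_or_nonempty with rfl | hI
  · simp [sq_nonneg]
  · rw [sum_const, nsmul_eq_mul, mul_div_cancel₀ _ (by exact_mod_cast hI.card_pos.ne')]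

theorem StRIP_of_card_exists_lt_le {Φ : Matrix (Fin m) (Fin N) ℝ} (hcols : unitCols Φ)
    {k : ℕ} {δ ε : ℝ} (hδ : 0 ≤ δ)
    (hbad : (#{I ∈ powersetCard k univ | ∃ i ∈ I, δ ^ 2 / k < ∑ j ∈ I.erase i, ip Φ i j ^ 2} : ℝ)
      ≤ ε * #(powersetCard k (univ : Finset (Fin N)))) :
    StRIP Φ k δ ε := by
  set P := powersetCard k (univ : Finset (Fin N))
  have hsplit : (#{I ∈ P | ∃ i ∈ I, δ ^ 2 / k < ∑ j ∈ I.erase i, ip Φ i j ^ 2} : ℝ) +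
      #{I ∈ P | ¬∃ i ∈ I, δ ^ 2 / k < ∑ j ∈ I.erase i, ip Φ i j ^ 2} = #P := by
    exact_mod_cast card_filter_add_card_filter_not _
  have hgood : (#{I ∈ P | ¬∃ i ∈ I, δ ^ 2 / k < ∑ j ∈ I.erase i, ip Φ i j ^ 2} : ℝ) ≤
      #{I ∈ P | specNorm (gram Φ I - 1) ≤ δ} := by
    refine Nat.cast_le.mpr (card_le_card fun I hI => ?_)
    obtain ⟨hIP, hI⟩ := mem_filter.mp hI
    push Not at hI
    rw [← (mem_powersetCard.mp hIP).2] at hI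
    exact mem_filter.mpr ⟨hIP, specNorm_gram_sub_one_le hcols hδ I hI⟩
  rw [StRIP]
  linarith

theorem card_filter_exists_mem_le_sum {α : Type*} [Fintype α] [DecidableEq α] (k : ℕ)
    (p : α → Finset α → Prop) [∀ i, DecidablePred (p i)]
    [DecidablePred fun I : Finset α => ∃ i ∈ I, p i (I.erase i)] :
    #{I ∈ powersetCard k univ | ∃ i ∈ I, p i (I.erase i)} ≤
      ∑ i, #{S ∈ powersetCard (k - 1) (univ.erase i) | p i S} := by
  calc #{I ∈ powersetCard k univ | ∃ i ∈ I, p i (I.erase i)}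
      ≤ #(univ.biUnion fun i => {S ∈ powersetCard (k - 1) (univ.erase i) | p i S}.image
          (insert i)) := by
        refine card_le_card fun I hI => ?_
        obtain ⟨hIP, i, hiI, hp⟩ := mem_filter.mp hI
        simp only [mem_biUnion, mem_univ, true_and, mem_image, mem_filter, mem_powersetCard]
        refine ⟨i, I.erase i, ⟨⟨erase_subset_erase i (subset_univ I), ?_⟩, hp⟩, insert_erase hiI⟩
        rw [card_erase_of_mem hiI, (mem_powersetCard.mp hIP).2]
    _ ≤ _ := card_biUnion_le.trans (sum_le_sum fun _ _ => card_image_le)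

theorem sum_sq_ip_erase_le_mu2max (Φ : Matrix (Fin m) (Fin N) ℝ) (hN : 1 < N) (i : Fin N) :
    ∑ j ∈ univ.erase i, ip Φ i j ^ 2 ≤ (N - 1) * mu2max Φ := by
  have hN1 : (0 : ℝ) < N - 1 := by
    rw [sub_pos]; exact_mod_cast hN
  set f : Fin N → ℝ := fun j => (∑ i ∈ univ.erase j, ip Φ i j ^ 2) / ((N : ℝ) - 1)
  have hbdd : BddAbove {t : ℝ | ∃ j, t = f j} :=
    ((Set.finite_range f).subset (by rintro _ ⟨j, rfl⟩; exact ⟨j, rfl⟩)).bddAbove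
  have hi : f i ≤ mu2max Φ := le_csSup hbdd ⟨i, rfl⟩
  rw [← div_le_iff₀' hN1]
  simpa only [f, ip_comm Φ i] using hi

theorem sum_sq_ip_erase_eq_of_coherenceInvariant {Φ : Matrix (Fin m) (Fin N) ℝ}
    (hinv : CoherenceInvariant Φ) (hN : 1 < N) (i : Fin N) :
    ∑ j ∈ univ.erase i, ip Φ i j ^ 2 = (N - 1) * mu2bar Φ := by
  have hrow : ∀ i', ∑ j ∈ univ.erase i', ip Φ i' j ^ 2 = ∑ j ∈ univ.erase i, ip Φ i j ^ 2 := by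
    intro i'
    have h := congrArg (fun s => (s.map (· ^ 2)).sum) (hinv i' i)
    simpa only [Multiset.map_map, Function.comp_def, sq_abs, sum_map_val] using h
  have hN0 : (N : ℝ) ≠ 0 := by positivity
  have hN1 : (N : ℝ) - 1 ≠ 0 := by
    rw [sub_ne_zero]; exact_mod_cast hN.ne'
  rw [mu2bar, sum_congr rfl fun i' _ => hrow i', sum_const, card_univ, Fintype.card_fin,
    nsmul_eq_mul]
  field_simp

theorem sum_sq_ip_erase_le {Φ : Matrix (Fin m) (Fin N) ℝ} {θ : ℝ} (hN : 1 < N)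
    (hθ : (CoherenceInvariant Φ ∧ θ = mu2bar Φ) ∨ θ = mu2max Φ) (i : Fin N) :
    ∑ j ∈ univ.erase i, ip Φ i j ^ 2 ≤ (N - 1) * θ := by
  rcases hθ with ⟨hinv, rfl⟩ | rfl
  · exact (sum_sq_ip_erase_eq_of_coherenceInvariant hinv hN i).le
  · exact sum_sq_ip_erase_le_mu2max Φ hN i

theorem tail_exponent_le {k x θ δ a μ ε l : ℝ} (hk : 1 ≤ k) (hε0 : 0 < ε) (hε1 : ε < 1)
    (ha1 : a < 1) (hμ : μ ≠ 0) (hx0 : 0 ≤ x) (hxθ : x ≤ θ) (h1 : θ ≤ a * δ ^ 2 / k ^ 2)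
    (h2 : μ ^ 4 ≤ (1 - a) ^ 2 * δ ^ 4 / (32 * k ^ 3 * log (2 * k / ε)))
    (hl : l = (1 - a) * δ ^ 2 / (2 * k ^ 2 * μ ^ 4)) :
    l * (k - 1) * x + (k - 1) * l ^ 2 * (μ ^ 2) ^ 2 - l * (δ ^ 2 / k) ≤ -log (2 * k / ε) := by
  have hk0 : 0 < k := by linarith
  have hμ4 : 0 < μ ^ 4 := by positivity
  have hl0 : 0 ≤ l := by
    rw [hl]; exact div_nonneg (mul_nonneg (by linarith) (sq_nonneg δ)) (by positivity)
  have hL : 0 < log (2 * k / ε) := log_pos (by rw [one_lt_div hε0]; linarith)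
  have hmean : (k - 1) * x ≤ a * δ ^ 2 / k :=
    calc (k - 1) * x ≤ k * θ := by nlinarith
      _ ≤ k * (a * δ ^ 2 / k ^ 2) := by gcongr
      _ = a * δ ^ 2 / k := by field_simp
  have hL8 : 8 * log (2 * k / ε) ≤ (1 - a) ^ 2 * δ ^ 4 / (4 * k ^ 3 * μ ^ 4) := by
    rw [le_div_iff₀ (by positivity)]
    rw [le_div_iff₀ (by positivity)] at h2
    linarith
  calc l * (k - 1) * x + (k - 1) * l ^ 2 * (μ ^ 2) ^ 2 - l * (δ ^ 2 / k)
      ≤ l * (a * δ ^ 2 / k) + k * l ^ 2 * μ ^ 4 - l * (δ ^ 2 / k) := by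
        rw [mul_assoc, ← pow_mul]
        gcongr
        linarith
    _ = -((1 - a) ^ 2 * δ ^ 4 / (4 * k ^ 3 * μ ^ 4)) := by
        rw [hl]; field_simp; ring
    _ ≤ -log (2 * k / ε) := by linarith

theorem card_filter_lt_sum_sq_ip_le {Φ : Matrix (Fin m) (Fin N) ℝ} {k : ℕ} {δ ε a μ θ : ℝ}
    (hN : 1 < N) (hk : 0 < k) (hδ : 0 < δ) (hε0 : 0 < ε) (hε1 : ε < 1) (ha0 : 0 ≤ a)
    (ha1 : a < 1) (i : Fin N) (hμ : ∀ j, i ≠ j → |ip Φ i j| ≤ μ)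
    (hrow : ∑ j ∈ univ.erase i, ip Φ i j ^ 2 ≤ (N - 1) * θ) (h1 : θ ≤ a * δ ^ 2 / k ^ 2)
    (h2 : μ ^ 4 ≤ (1 - a) ^ 2 * δ ^ 4 / (32 * k ^ 3 * log (2 * k / ε))) :
    (#{S ∈ powersetCard (k - 1) (univ.erase i) | δ ^ 2 / k < ∑ j ∈ S, ip Φ i j ^ 2} : ℝ) ≤
      (N - 1).choose (k - 1) * (ε / (2 * k)) := by
  have hk1 : (1 : ℝ) ≤ k := by exact_mod_cast hk
  have hc : ∀ j ∈ univ.erase i, 0 ≤ ip Φ i j ^ 2 ∧ ip Φ i j ^ 2 ≤ μ ^ 2 := fun j hj =>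
    ⟨sq_nonneg _, sq_abs (ip Φ i j) ▸
      pow_le_pow_left₀ (abs_nonneg _) (hμ j (ne_of_mem_erase hj).symm) 2⟩
  by_cases hsmall : 2 * k ^ 2 * μ ^ 2 < (1 - a) * δ ^ 2
  · -- no subset is bad: `(k - 1) μ² < δ² / k`
    have hempty : {S ∈ powersetCard (k - 1) (univ.erase i) |
        δ ^ 2 / k < ∑ j ∈ S, ip Φ i j ^ 2} = ∅ := by
      refine filter_false_of_mem fun S hS => not_lt.mpr ?_
      obtain ⟨hSi, hScard⟩ := mem_powersetCard.mp hS
      have hsum : ∑ j ∈ S, ip Φ i j ^ 2 ≤ (k - 1 : ℕ) * μ ^ 2 := by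
        rw [← hScard, ← nsmul_eq_mul]
        exact sum_le_card_nsmul _ _ _ fun j hj => (hc j (hSi hj)).2
      refine hsum.trans ?_
      rw [le_div_iff₀ (by positivity), Nat.cast_pred hk]
      nlinarith [sq_nonneg μ, sq_nonneg δ, mul_nonneg ha0 (sq_nonneg δ)]
    rw [hempty, card_empty, Nat.cast_zero]
    positivity
  push Not at hsmall
  have hμ0 : μ ≠ 0 := by
    rintro rfl
    nlinarith [mul_pos (sub_pos.mpr ha1) (pow_pos hδ 2)]
  set l := (1 - a) * δ ^ 2 / (2 * k ^ 2 * μ ^ 4)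
  have hl0 : 0 ≤ l := div_nonneg (mul_nonneg (by linarith) (sq_nonneg δ)) (by positivity)
  have hlM : l * μ ^ 2 ≤ 1 := by
    rw [div_mul_eq_mul_div, div_le_one (by positivity)]
    nlinarith [sq_nonneg μ]
  have hN1 : ((N - 1 : ℕ) : ℝ) = N - 1 := by rw [Nat.cast_pred (by omega)]
  have htail := card_filter_lt_sum_le (fun j => ip Φ i j ^ 2) (δ ^ 2 / k) hl0 hlM (k - 1)
    (univ.erase i) hc
  rw [card_erase_of_mem (mem_univ i), card_univ, Fintype.card_fin] at htail
  refine htail.trans (mul_le_mul_of_nonneg_left ?_ (Nat.cast_nonneg _))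
  have hε : ε / (2 * k) = exp (-log (2 * k / ε)) := by
    rw [Real.exp_neg, exp_log (by positivity), inv_div]
  rw [hε, exp_le_exp, Nat.cast_pred hk]
  refine tail_exponent_le hk1 hε0 hε1 ha1 hμ0 (by positivity) ?_ h1 h2 rfl
  rw [hN1, div_le_iff₀' (by rw [sub_pos]; exact_mod_cast hN)]
  exact hrow

/-- Corollary: coherence conditions implying StRIP. -/
theorem stmt12 (m N k : ℕ) (hk : (k : ℝ) < N / 2 - 1)
    (δ ε₁ a μ θ : ℝ) (hδ : 0 < δ) (hε0 : 0 < ε₁) (hε1 : ε₁ < 1) (ha0 : 0 < a) (ha1 : a < 1)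
    (Φ : Matrix (Fin m) (Fin N) ℝ) (hcols : unitCols Φ)
    (hμ : ∀ i j : Fin N, i ≠ j → |ip Φ i j| ≤ μ)
    (hθ : (CoherenceInvariant Φ ∧ θ = mu2bar Φ) ∨ θ = mu2max Φ)
    (h1 : θ ≤ a * δ ^ 2 / k ^ 2)
    (h2 : μ ^ 4 ≤ (1 - a) ^ 2 * δ ^ 4 / (32 * k ^ 3 * Real.log (2 * k / ε₁))) :
    StRIP Φ k δ ε₁ := by
  have hN : 1 < N := by
    have : (2 : ℝ) < N := by linarith [(Nat.cast_nonneg k : (0 : ℝ) ≤ k)]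
    exact_mod_cast this.trans' one_lt_two
  refine StRIP_of_card_exists_lt_le hcols hδ.le ?_
  rcases Nat.eq_zero_or_pos k with rfl | hk0
  · simp [filter_singleton, hε0.le]
  have hchoose : (N : ℝ) * (N - 1).choose (k - 1) = k * N.choose k := by
    have h := Nat.add_one_mul_choose_eq (N - 1) (k - 1)
    rw [Nat.sub_add_cancel hN.le, Nat.sub_add_cancel hk0] at h
    rw [mul_comm (k : ℝ)]; exact_mod_cast h
  calc (#{I ∈ powersetCard k univ | ∃ i ∈ I, δ ^ 2 / k < ∑ j ∈ I.erase i, ip Φ i j ^ 2} : ℝ)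
      ≤ ∑ i, (#{S ∈ powersetCard (k - 1) (univ.erase i) |
          δ ^ 2 / k < ∑ j ∈ S, ip Φ i j ^ 2} : ℝ) := by
        rw [← Nat.cast_sum, Nat.cast_le]
        exact card_filter_exists_mem_le_sum k
          fun (i : Fin N) (S : Finset (Fin N)) => δ ^ 2 / (k : ℝ) < ∑ j ∈ S, ip Φ i j ^ 2
    _ ≤ ∑ _i : Fin N, ((N - 1).choose (k - 1) * (ε₁ / (2 * k)) : ℝ) :=
        sum_le_sum fun i _ => card_filter_lt_sum_sq_ip_le hN hk0 hδ hε0 hε1 ha0.le ha1 i (hμ i)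
          (sum_sq_ip_erase_le hN hθ i) h1 h2
    _ = ε₁ / 2 * #(powersetCard k (univ : Finset (Fin N))) := by
        rw [sum_const, card_univ, Fintype.card_fin, nsmul_eq_mul, ← mul_assoc, hchoose,
          card_powersetCard, card_univ, Fintype.card_fin]
        field_simp
    _ ≤ ε₁ * #(powersetCard k (univ : Finset (Fin N))) := by
        gcongr; linarith
end
end
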